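/- arXiv:2410.13208 — 2 statements merged into one kernel-verified Lean document; each statement's English description precedes it below -/
import Mathlib

section
/- Let γ ∈ ℤ/2^{n+1}ℤ with a odd, and m odd with m·m' ≡ 1 (mod 2^{n+2}). In the Weil representation of Mp₂(ℤ) on ℂD_{2ⁿ}(a) where D_{2ⁿ}(a) = (ℤ/2^{n+1}ℤ, γ ↦ aγ²/2^{n+2}), one has (for n odd) ST^{m'}ST^mS e^γ = e(-3a/8)·e(am/8)·e(-am'γ²/2^{n+2})·e^{-m'γ}, and (for n even) ST^{m'}ST^mS e^γ = [(1+e(-a/4))³(1+e(am/4))/4]·e(-am'γ²/2^{n+2})·e^{-m'γ}. -/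
/-!
Apply the five operators one at a time. `S e^γ` is a linear character; `T^m` turns it into a
chirp, and the next `S` produces a quadratic Gauss sum modulo `2^(n+1)`. Completing the square
with `m m' ≡ 1 (mod 2^(n+2))` reduces it to `∑_j e(a m j² / 2^(n+2))` times a chirp in the new
variable, and the Gauss sum equals `√(2^(n+1)) e(sign/8)` by the recursion `G_{n+2} = 2 G_n`
(even `j` give two copies of `G_n`, odd `j` cancel in pairs). `T^{m'}` then removes the
quadratic part, and the last `S` is an orthogonality sum of a character of `ℤ/2^(n+1)ℤ`,
supported at `-m'γ` because `a` is a unit.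
-/

open Complex

noncomputable section

/-- `e(x) = exp(2πix)`. -/
def eC (x : ℂ) : ℂ := Complex.exp (2 * Real.pi * Complex.I * x)

/-- The basis vector `e^γ` of `ℂ D_{2ⁿ}(a)`. -/
def bas {α : Type*} [DecidableEq α] (γ : α) : α → ℂ := fun x => if x = γ then 1 else 0

/-- The value `e(sign(D_{2ⁿ}(a))/8)`, namely `e(a/8)` for `n` odd and `(1+e(a/4))/√2`
for `n` even. -/

def sgEven (n : ℕ) (a : ℤ) : ℂ :=
  if Odd n then eC ((a : ℂ) / 8) else (1 + eC ((a : ℂ) / 4)) / Real.sqrt 2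

open Finset

lemma eC_neg (x : ℂ) : eC (-x) = (eC x)⁻¹ := by
  rw [eC, eC, ← Complex.exp_neg, mul_neg]

lemma eC_zpow (x : ℂ) (k : ℤ) : eC x ^ k = eC (k * x) := by
  rw [eC, eC, ← Complex.exp_int_mul]
  ring_nf

lemma eC_odd_div_two {c : ℤ} (hc : Odd c) : eC (c / 2) = -1 := by
  obtain ⟨t, rfl⟩ := hc
  rw [eC, ← Complex.exp_pi_mul_I, Complex.exp_eq_exp_iff_exists_int]
  exact ⟨t, by push_cast; ring⟩

def e2 (n : ℕ) (k : ℤ) : ℂ := eC (k / 2 ^ (n + 2))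

lemma e2_eq_stdAddChar (n : ℕ) (k : ℤ) :
    e2 n k = ZMod.stdAddChar (k : ZMod (2 ^ (n + 2))) := by
  rw [ZMod.stdAddChar_coe, e2, eC]
  push_cast
  ring_nf

lemma e2_add (n : ℕ) (j k : ℤ) : e2 n (j + k) = e2 n j * e2 n k := by
  simp only [e2_eq_stdAddChar, Int.cast_add, AddChar.map_add_eq_mul]

lemma e2_congr (n : ℕ) {j k : ℤ} (h : (2 ^ (n + 2) : ℤ) ∣ j - k) : e2 n j = e2 n k := by
  rw [e2_eq_stdAddChar, e2_eq_stdAddChar, (ZMod.intCast_eq_intCast_iff_dvd_sub k j _).mpr]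
  exact_mod_cast h

lemma e2_zpow (n : ℕ) (j k : ℤ) : e2 n j ^ k = e2 n (k * j) := by
  rw [e2, e2, eC_zpow]
  push_cast
  ring_nf

lemma e2_two_pow_mul_odd (n : ℕ) {s : ℤ} (hs : Odd s) : e2 n (2 ^ (n + 1) * s) = -1 := by
  rw [e2, ← eC_odd_div_two hs]
  congr 1
  push_cast
  field_simp
  ring

lemma e2_four_mul (n : ℕ) (k : ℤ) : e2 (n + 2) (4 * k) = e2 n k := by
  rw [e2, e2]
  congr 1
  push_cast
  field_simp
  ring

lemma e2_two_mul (n : ℕ) (k : ℤ) : e2 n (2 * k) = ZMod.stdAddChar (k : ZMod (2 ^ (n + 1))) := by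
  rw [ZMod.stdAddChar_coe, e2, eC]
  push_cast
  ring_nf

lemma sum_e2_two_mul_val_mul (n : ℕ) (s : ℤ) :
    ∑ δ : ZMod (2 ^ (n + 1)), e2 n (2 * (δ.val * s)) =
      if (s : ZMod (2 ^ (n + 1))) = 0 then 2 ^ (n + 1) else 0 := by
  simp only [e2_two_mul, Int.cast_mul, Int.cast_natCast, ZMod.natCast_zmod_val]
  rw [AddChar.sum_mulShift _ (ZMod.isPrimitive_stdAddChar _), ZMod.card]
  push_cast
  rfl

def quadGaussSum (n : ℕ) (c : ℤ) : ℂ := ∑ j ∈ range (2 ^ (n + 1)), e2 n (c * j ^ 2)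

lemma e2_mul_sq_congr (n : ℕ) (c : ℤ) {x y : ℤ} (h : (2 ^ (n + 1) : ℤ) ∣ x - y) :
    e2 n (c * x ^ 2) = e2 n (c * y ^ 2) := by
  obtain ⟨t, ht⟩ := h
  refine e2_congr n ⟨c * (y * t + 2 ^ n * t ^ 2), ?_⟩
  rw [show x = y + 2 ^ (n + 1) * t by linarith]
  ring

lemma sum_range_two_mul {M : Type*} [AddCommMonoid M] (k : ℕ) (f : ℕ → M) :
    ∑ j ∈ range (2 * k), f j = ∑ t ∈ range k, (f (2 * t) + f (2 * t + 1)) := by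
  induction k with
  | zero => simp
  | succ k ih =>
    rw [sum_range_succ, ← ih, show 2 * (k + 1) = 2 * k + 1 + 1 by ring, sum_range_succ,
      sum_range_succ, add_assoc]

lemma sum_range_e2_mul_sq_two_periods (n : ℕ) (c : ℤ) :
    ∑ t ∈ range (2 ^ (n + 2)), e2 n (c * t ^ 2) = 2 * quadGaussSum n c := by
  have hshift (t : ℕ) : e2 n (c * ((2 ^ (n + 1) + t : ℕ) : ℤ) ^ 2) = e2 n (c * (t : ℤ) ^ 2) :=
    e2_mul_sq_congr n c ⟨1, by push_cast; ring⟩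
  rw [pow_succ, mul_two, sum_range_add]
  simp only [hshift, quadGaussSum]
  ring

/- Shifting `t` by `2^(n+1)` changes `(2t+1)²` by `2^(n+3)(2t+1)` modulo `2^(n+4)`, which
flips the sign of the summand. -/

lemma sum_range_e2_mul_odd_sq (n : ℕ) {c : ℤ} (hc : Odd c) :
    ∑ t ∈ range (2 ^ (n + 2)), e2 (n + 2) (c * ((2 * t + 1 : ℕ) : ℤ) ^ 2) = 0 := by
  have hshift (t : ℕ) : e2 (n + 2) (c * ((2 * (2 ^ (n + 1) + t) + 1 : ℕ) : ℤ) ^ 2) =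
      -e2 (n + 2) (c * ((2 * t + 1 : ℕ) : ℤ) ^ 2) := by
    have hodd : Odd (c * (2 * t + 1)) := hc.mul (odd_two_mul_add_one _)
    rw [e2_congr (n + 2) (k := 2 ^ (n + 3) * (c * (2 * t + 1)) + c * ((2 * t + 1 : ℕ) : ℤ) ^ 2)
        ⟨c * 2 ^ n, by push_cast; ring⟩,
      e2_add, e2_two_pow_mul_odd _ hodd, neg_one_mul]
  rw [pow_succ, mul_two, sum_range_add, ← sum_add_distrib]
  simp only [hshift, add_neg_cancel, sum_const_zero]

lemma quadGaussSum_add_two (n : ℕ) {c : ℤ} (hc : Odd c) :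
    quadGaussSum (n + 2) c = 2 * quadGaussSum n c := by
  have heven (t : ℕ) : e2 (n + 2) (c * ((2 * t : ℕ) : ℤ) ^ 2) = e2 n (c * (t : ℤ) ^ 2) := by
    rw [← e2_four_mul n]
    congr 1
    push_cast
    ring
  rw [quadGaussSum, pow_succ', sum_range_two_mul, sum_add_distrib, sum_range_e2_mul_odd_sq n hc]
  simp only [heven, sum_range_e2_mul_sq_two_periods, add_zero]

lemma quadGaussSum_zero (c : ℤ) : quadGaussSum 0 c = Real.sqrt (2 ^ (0 + 1)) * sgEven 0 c := by
  rw [sgEven, if_neg Nat.not_odd_zero, zero_add, pow_one,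
    mul_div_cancel₀ _ (by norm_num : (Real.sqrt 2 : ℂ) ≠ 0), quadGaussSum,
    show 2 ^ (0 + 1) = 1 + 1 by rfl, sum_range_succ, sum_range_one, e2, e2]
  norm_num [eC]

lemma quadGaussSum_one {c : ℤ} (hc : Odd c) :
    quadGaussSum 1 c = Real.sqrt (2 ^ (1 + 1)) * sgEven 1 c := by
  have h2 : e2 1 (c * (2 : ℕ) ^ 2) = -1 := by
    rw [← e2_two_pow_mul_odd 1 hc]
    congr 1
    push_cast
    ring
  have h1 : e2 1 (c * (1 : ℕ) ^ 2) = eC (c / 8) := by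
    rw [e2]
    congr 1
    push_cast
    ring
  have h3 : e2 1 (c * (3 : ℕ) ^ 2) = e2 1 (c * (1 : ℕ) ^ 2) :=
    e2_congr 1 ⟨c, by push_cast; ring⟩
  have hsqrt : Real.sqrt (2 ^ (1 + 1)) = 2 := by
    rw [show (2 : ℝ) ^ (1 + 1) = 2 ^ 2 by norm_num, Real.sqrt_sq zero_le_two]
  rw [quadGaussSum, show 2 ^ (1 + 1) = 4 by rfl]
  simp only [sum_range_succ, sum_range_zero, h2, h3, h1, hsqrt, sgEven, if_pos odd_one]
  rw [show c * ((0 : ℕ) : ℤ) ^ 2 = 0 by simp, e2, Int.cast_zero, zero_div, eC, mul_zero,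
    Complex.exp_zero]
  push_cast
  ring

lemma quadGaussSum_eq (n : ℕ) {c : ℤ} (hc : Odd c) :
    quadGaussSum n c = Real.sqrt (2 ^ (n + 1)) * sgEven n c := by
  induction n using Nat.twoStepInduction with
  | zero => exact quadGaussSum_zero c
  | one => exact quadGaussSum_one hc
  | more k ih _ =>
    have hsg : sgEven (k + 2) c = sgEven k c := by simp [sgEven, Nat.odd_add]
    have hsqrt : Real.sqrt (2 ^ (k + 2 + 1)) = 2 * Real.sqrt (2 ^ (k + 1)) := by
      rw [show (2 : ℝ) ^ (k + 2 + 1) = 2 ^ 2 * 2 ^ (k + 1) by ring, Real.sqrt_mul (by positivity),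
        Real.sqrt_sq zero_le_two]
    rw [quadGaussSum_add_two k hc, ih, hsg, hsqrt]
    push_cast
    ring

lemma div_sqrt_pow_three_mul_quadGaussSum (n : ℕ) {c : ℤ} (hc : Odd c) (s : ℂ) :
    (s / Real.sqrt (2 ^ (n + 1))) ^ 3 * quadGaussSum n c * 2 ^ (n + 1) = s ^ 3 * sgEven n c := by
  have hsq : (Real.sqrt (2 ^ (n + 1)) : ℂ) ^ 2 = 2 ^ (n + 1) := by
    rw [← Complex.ofReal_pow, Real.sq_sqrt (by positivity)]
    push_cast
    rfl
  have hne : (Real.sqrt (2 ^ (n + 1)) : ℂ) ≠ 0 := by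
    rw [Complex.ofReal_ne_zero]
    positivity
  rw [quadGaussSum_eq n hc, ← hsq]
  field_simp

lemma sgEven_inv_pow_three_mul_of_odd {n : ℕ} (hn : Odd n) (a m : ℤ) :
    (sgEven n a)⁻¹ ^ 3 * sgEven n (a * m) = eC (-(3 * (a : ℂ)) / 8) * eC ((a : ℂ) * m / 8) := by
  simp only [sgEven, if_pos hn, ← eC_neg, ← zpow_natCast, eC_zpow]
  push_cast
  ring_nf

lemma sgEven_inv_pow_three_mul_of_even {n : ℕ} (hn : Even n) {a : ℤ} (ha : Odd a) (m : ℤ) :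
    (sgEven n a)⁻¹ ^ 3 * sgEven n (a * m) =
      (1 + eC (-(a : ℂ) / 4)) ^ 3 * (1 + eC ((a : ℂ) * m / 4)) / 4 := by
  set z := eC ((a : ℂ) / 4)
  have hz : z ^ 2 = -1 := by
    rw [← eC_odd_div_two ha, ← zpow_natCast, eC_zpow]
    push_cast
    ring_nf
  have hzinv : eC (-(a : ℂ) / 4) = -z := by
    rw [neg_div, eC_neg]
    exact inv_eq_of_mul_eq_one_right (by linear_combination -hz)
  have hinv : (1 + z)⁻¹ = (1 - z) / 2 :=
    inv_eq_of_mul_eq_one_right (by linear_combination -hz / 2)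
  have hsq : (Real.sqrt 2 : ℂ) ^ 2 = 2 := by
    rw [← Complex.ofReal_pow, Real.sq_sqrt zero_le_two]
    push_cast
    rfl
  have hne : (Real.sqrt 2 : ℂ) ≠ 0 := by
    rw [Complex.ofReal_ne_zero]
    positivity
  simp only [sgEven, if_neg (Nat.not_odd_iff_even.mpr hn), hzinv]
  rw [inv_div, div_eq_mul_inv _ (1 + z), hinv]
  push_cast
  field_simp
  linear_combination 4 * (1 - z) ^ 3 * (1 + eC ((a : ℂ) * m / 4)) * hsq

lemma sum_zmod_val_eq_sum_range {M : Type*} [AddCommMonoid M] (N : ℕ) [NeZero N] (f : ℕ → M) :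
    ∑ x : ZMod N, f x.val = ∑ j ∈ range N, f j :=
  sum_nbij' (fun x => x.val) (fun j => (j : ZMod N))
    (fun x _ => mem_range.mpr (ZMod.val_lt x)) (fun _ _ => mem_univ _)
    (fun x _ => ZMod.natCast_zmod_val x) (fun _ hj => ZMod.val_cast_of_lt (mem_range.mp hj))
    (fun _ _ => rfl)

lemma sum_e2_mul_sq_sub (n : ℕ) (a m m' : ℤ) (hmm' : (2 ^ (n + 2) : ℤ) ∣ m * m' - 1) (u : ℤ) :
    ∑ β : ZMod (2 ^ (n + 1)), e2 n (a * m * β.val ^ 2 - 2 * a * u * β.val) =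
      quadGaussSum n (a * m) * e2 n (-(a * m' * u ^ 2)) := by
  obtain ⟨k, hk⟩ := hmm'
  set w : ZMod (2 ^ (n + 1)) := ((m' * u : ℤ) : ZMod (2 ^ (n + 1)))
  have hsquare (β : ZMod (2 ^ (n + 1))) : e2 n (a * m * β.val ^ 2 - 2 * a * u * β.val) =
      e2 n (a * m * ((β - w).val : ℤ) ^ 2) * e2 n (-(a * m' * u ^ 2)) := by
    have hval : (2 ^ (n + 1) : ℤ) ∣ ((β - w).val : ℤ) - (β.val - m' * u) := by
      exact_mod_cast (ZMod.intCast_zmod_eq_zero_iff_dvd _ _).mp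
        (by push_cast [w, ZMod.natCast_zmod_val]; ring)
    rw [e2_mul_sq_congr n _ hval, ← e2_add]
    refine e2_congr n ⟨k * (2 * a * u * β.val - a * m' * u ^ 2), ?_⟩
    linear_combination (2 * a * u * β.val - a * m' * u ^ 2) * hk
  simp only [hsquare, ← sum_mul]
  rw [Fintype.sum_equiv (Equiv.subRight w) (fun β => e2 n (a * m * ((β - w).val : ℤ) ^ 2))
      (fun β => e2 n (a * m * (β.val : ℤ) ^ 2)) (fun _ => rfl),
    sum_zmod_val_eq_sum_range (2 ^ (n + 1)) (fun j => e2 n (a * m * (j : ℤ) ^ 2)), quadGaussSum]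

lemma sum_smul_bas {ι : Type*} [Fintype ι] [DecidableEq ι] (f : ι → ℂ) :
    ∑ β, f β • bas β = f := by
  ext x
  simp [bas]

lemma LinearMap.apply_eq_sum_mul_apply_bas {ι : Type*} [Fintype ι] [DecidableEq ι]
    (L : (ι → ℂ) →ₗ[ℂ] (ι → ℂ)) (f : ι → ℂ) (δ : ι) :
    L f δ = ∑ β, f β * L (bas β) δ := by
  conv_lhs => rw [← sum_smul_bas f]
  simp [Finset.sum_apply]

lemma LinearEquiv.zpow_apply_of_apply_eq_smul {K V : Type*} [Field K] [AddCommGroup V]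
    [Module K V] (L : V ≃ₗ[K] V) {v : V} {c : K} (h : L v = c • v) (k : ℤ) :
    (L ^ k) v = c ^ k • v := by
  rcases eq_or_ne c 0 with rfl | hc
  · have hv : v = 0 := L.map_eq_zero_iff.mp (by rw [h, zero_smul])
    simp [hv]
  have hsymm : L.symm v = c⁻¹ • v := L.injective (by rw [L.apply_symm_apply, map_smul, h,
    smul_smul, inv_mul_cancel₀ hc, one_smul])
  induction k using Int.induction_on with
  | zero => simp
  | succ k ih =>
    rw [zpow_add_one, zpow_add_one₀ hc, LinearEquiv.mul_apply, h, map_smul, ih, smul_smul,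
      mul_comm]
  | pred k ih =>
    rw [zpow_sub_one, zpow_sub_one₀ hc, LinearEquiv.mul_apply, LinearEquiv.coe_inv, hsymm,
      map_smul, ih, smul_smul, mul_comm]

lemma isUnit_intCast_two_pow_of_odd {a : ℤ} (ha : Odd a) (k : ℕ) : IsUnit (a : ZMod (2 ^ k)) := by
  obtain ⟨t, rfl⟩ := ha
  rw [ZMod.coe_int_isUnit_iff_isCoprime]
  have h2 : IsCoprime (2 : ℤ) (2 * t + 1) := ⟨-t, 1, by ring⟩
  exact_mod_cast h2.pow_left (m := k)

section Weil

variable {n : ℕ} {a : ℤ} {τ : ℂ}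
  {TL SL : (ZMod (2 ^ (n + 1)) → ℂ) ≃ₗ[ℂ] (ZMod (2 ^ (n + 1)) → ℂ)}

lemma weilT_zpow_apply
    (hT : ∀ β : ZMod (2 ^ (n + 1)), TL (bas β) = e2 n (a * β.val ^ 2) • bas β)
    (k : ℤ) (f : ZMod (2 ^ (n + 1)) → ℂ) (β : ZMod (2 ^ (n + 1))) :
    (TL ^ k) f β = e2 n (k * (a * β.val ^ 2)) * f β := by
  rw [← LinearEquiv.coe_coe, LinearMap.apply_eq_sum_mul_apply_bas]
  simp [LinearEquiv.zpow_apply_of_apply_eq_smul TL (hT _), e2_zpow, bas, mul_comm]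

lemma weilS_apply_bas (hS : ∀ β : ZMod (2 ^ (n + 1)),
      SL (bas β) = τ • ∑ δ, e2 n (-(2 * a * β.val * δ.val)) • bas δ)
    (γ δ : ZMod (2 ^ (n + 1))) :
    SL (bas γ) δ = τ * e2 n (-(2 * a * γ.val * δ.val)) := by
  rw [hS, sum_smul_bas, Pi.smul_apply, smul_eq_mul]

lemma weilS_apply (hS : ∀ β : ZMod (2 ^ (n + 1)),
      SL (bas β) = τ • ∑ δ, e2 n (-(2 * a * β.val * δ.val)) • bas δ)
    (f : ZMod (2 ^ (n + 1)) → ℂ) (δ : ZMod (2 ^ (n + 1))) :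
    SL f δ = τ * ∑ β, f β * e2 n (-(2 * a * β.val * δ.val)) := by
  rw [← LinearEquiv.coe_coe, LinearMap.apply_eq_sum_mul_apply_bas, mul_sum]
  simp only [LinearEquiv.coe_coe, weilS_apply_bas hS, mul_left_comm]

lemma weil_STS_apply_bas {m m' : ℤ} (hmm' : (2 ^ (n + 2) : ℤ) ∣ m * m' - 1)
    (hT : ∀ β : ZMod (2 ^ (n + 1)), TL (bas β) = e2 n (a * β.val ^ 2) • bas β)
    (hS : ∀ β : ZMod (2 ^ (n + 1)),
      SL (bas β) = τ • ∑ δ, e2 n (-(2 * a * β.val * δ.val)) • bas δ)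
    (γ δ : ZMod (2 ^ (n + 1))) :
    SL ((TL ^ m) (SL (bas γ))) δ =
      τ ^ 2 * quadGaussSum n (a * m) * e2 n (-(a * m' * (γ.val + δ.val) ^ 2)) := by
  have hterm (β : ZMod (2 ^ (n + 1))) :
      (TL ^ m) (SL (bas γ)) β * e2 n (-(2 * a * β.val * δ.val)) =
        τ * e2 n (a * m * β.val ^ 2 - 2 * a * (γ.val + δ.val) * β.val) := by
    rw [weilT_zpow_apply hT, weilS_apply_bas hS, mul_left_comm, mul_assoc, ← e2_add, ← e2_add]
    ring_nf
  rw [weilS_apply hS]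
  simp only [hterm, ← mul_sum, sum_e2_mul_sq_sub n a m m' hmm']
  ring

lemma weil_STSTS_apply_bas (ha : Odd a) {m m' : ℤ} (hmm' : (2 ^ (n + 2) : ℤ) ∣ m * m' - 1)
    (hT : ∀ β : ZMod (2 ^ (n + 1)), TL (bas β) = e2 n (a * β.val ^ 2) • bas β)
    (hS : ∀ β : ZMod (2 ^ (n + 1)),
      SL (bas β) = τ • ∑ δ, e2 n (-(2 * a * β.val * δ.val)) • bas δ)
    (γ : ZMod (2 ^ (n + 1))) :
    (SL * TL ^ m' * SL * TL ^ m * SL) (bas γ) =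
      (τ ^ 3 * quadGaussSum n (a * m) * 2 ^ (n + 1) * e2 n (-(a * m' * γ.val ^ 2))) •
        bas (-(m' : ZMod (2 ^ (n + 1))) * γ) := by
  have hterm (δ ε : ZMod (2 ^ (n + 1))) :
      (TL ^ m') (SL ((TL ^ m) (SL (bas γ)))) δ * e2 n (-(2 * a * δ.val * ε.val)) =
        τ ^ 2 * quadGaussSum n (a * m) * e2 n (-(a * m' * γ.val ^ 2)) *
          e2 n (2 * (δ.val * -(a * (m' * γ.val + ε.val)))) := by
    -- `T^{m'}` cancels the quadratic term in `δ`, leaving a linear character.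
    have hexp : e2 n (m' * (a * δ.val ^ 2)) * e2 n (-(a * m' * (γ.val + δ.val) ^ 2)) *
        e2 n (-(2 * a * δ.val * ε.val)) =
          e2 n (-(a * m' * γ.val ^ 2)) * e2 n (2 * (δ.val * -(a * (m' * γ.val + ε.val)))) := by
      rw [← e2_add, ← e2_add, ← e2_add]
      ring_nf
    rw [weilT_zpow_apply hT, weil_STS_apply_bas hmm' hT hS]
    linear_combination τ ^ 2 * quadGaussSum n (a * m) * hexp
  have hsupport (ε : ZMod (2 ^ (n + 1))) :
      ((-(a * (m' * γ.val + ε.val)) : ℤ) : ZMod (2 ^ (n + 1))) = 0 ↔ ε = -m' * γ := by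
    push_cast [ZMod.natCast_zmod_val]
    rw [neg_eq_zero, (isUnit_intCast_two_pow_of_odd ha _).mul_right_eq_zero, neg_mul,
      eq_neg_iff_add_eq_zero, add_comm ε]
  ext ε
  simp only [LinearEquiv.mul_apply, weilS_apply hS _ ε, hterm, ← mul_sum,
    sum_e2_two_mul_val_mul, hsupport, Pi.smul_apply, smul_eq_mul, bas]
  split_ifs <;> ring

end Weil

/-- in the Weil representation of `Mp₂(ℤ)` on
`ℂ D_{2ⁿ}(a) = ℂ[ℤ/2^{n+1}ℤ]` (with `T` and `S` acting as `TL` and `SL` below), for `m`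
odd with `m m' ≡ 1 (mod 2^{n+2})` one has
`ρ(S T^{m'} S T^m S) e^γ = e(-3a/8) e(am/8) e(-am'γ²/2^{n+2}) e^{-m'γ}` for `n` odd, and
`ρ(S T^{m'} S T^m S) e^γ = [(1+e(-a/4))³(1+e(am/4))/4] e(-am'γ²/2^{n+2}) e^{-m'γ}`
for `n` even. -/
theorem stmt14 (n : ℕ) (a : ℤ) (ha : Odd a) (m m' : ℤ) (hm : Odd m)
    (hmm' : (m * m' : ℤ) ≡ 1 [ZMOD (2 ^ (n + 2))])
    (TL SL : (ZMod (2 ^ (n + 1)) → ℂ) ≃ₗ[ℂ] (ZMod (2 ^ (n + 1)) → ℂ))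
    (hT : ∀ γ : ZMod (2 ^ (n + 1)), TL (bas γ) =
      eC ((a : ℂ) * (γ.val : ℂ) ^ 2 / 2 ^ (n + 2)) • bas γ)
    (hS : ∀ γ : ZMod (2 ^ (n + 1)), SL (bas γ) =
      ((sgEven n a)⁻¹ / Real.sqrt (2 ^ (n + 1))) •
        ∑ β : ZMod (2 ^ (n + 1)),
          eC (-(2 * (a : ℂ) * (γ.val : ℂ) * (β.val : ℂ)) / 2 ^ (n + 2)) • bas β) :
    ∀ γ : ZMod (2 ^ (n + 1)),
      (Odd n →
        (SL * TL ^ m' * SL * TL ^ m * SL) (bas γ) =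
          (eC (-(3 * (a : ℂ)) / 8) * eC ((a : ℂ) * (m : ℂ) / 8) *
              eC (-((a : ℂ) * (m' : ℂ) * (γ.val : ℂ) ^ 2) / 2 ^ (n + 2))) •
            bas (-(m' : ZMod (2 ^ (n + 1))) * γ)) ∧
      (Even n →
        (SL * TL ^ m' * SL * TL ^ m * SL) (bas γ) =
          (((1 + eC (-(a : ℂ) / 4)) ^ 3 * (1 + eC ((a : ℂ) * (m : ℂ) / 4)) / 4) *
              eC (-((a : ℂ) * (m' : ℂ) * (γ.val : ℂ) ^ 2) / 2 ^ (n + 2))) •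
            bas (-(m' : ZMod (2 ^ (n + 1))) * γ)) := by
  intro γ
  have hdvd : (2 ^ (n + 2) : ℤ) ∣ m * m' - 1 := hmm'.symm.dvd
  have hT' (β : ZMod (2 ^ (n + 1))) : TL (bas β) = e2 n (a * β.val ^ 2) • bas β := by
    rw [hT, e2]
    push_cast
    ring_nf
  have hS' (β : ZMod (2 ^ (n + 1))) : SL (bas β) = ((sgEven n a)⁻¹ / Real.sqrt (2 ^ (n + 1))) •
      ∑ δ, e2 n (-(2 * a * β.val * δ.val)) • bas δ := by
    simp only [hS, e2]
    push_cast
    ring_nf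
  have hphase : e2 n (-(a * m' * γ.val ^ 2)) =
      eC (-((a : ℂ) * (m' : ℂ) * (γ.val : ℂ) ^ 2) / 2 ^ (n + 2)) := by
    rw [e2]
    push_cast
    ring_nf
  rw [weil_STSTS_apply_bas ha hdvd hT' hS', div_sqrt_pow_three_mul_quadGaussSum n (ha.mul hm),
    hphase]
  exact ⟨fun hn => by rw [sgEven_inv_pow_three_mul_of_odd hn],
    fun hn => by rw [sgEven_inv_pow_three_mul_of_even hn ha]⟩
end
end

section
/- Every holomorphic Jacobi form of weight 1 and index 1 on Γ₀(N) vanishes, for every positive integer N; i.e., J_{1,1}(N) = 0. -/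
open Complex Matrix MatrixGroups CongruenceSubgroup UpperHalfPlane
open scoped Manifold

noncomputable section

/-- A holomorphic Jacobi form of weight `1` and index `m` on `Γ₀(N)`: a holomorphic
function `φ : ℍ × ℂ → ℂ` satisfying the weight-one index-`m` modular transformation law
under `Γ₀(N)`, the elliptic transformation law, and having, for every `g ∈ SL₂(ℤ)`, a
Fourier expansion of `φ|_{1,m} g` supported on `n ∈ (1/h)ℕ`, `r ∈ ℤ` with `4nm - r² ≥ 0`. -/
def IsJacobiFormOne (m N : ℕ) (φ : UpperHalfPlane × ℂ → ℂ) : Prop :=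
  MDifferentiable (𝓘(ℂ).prod 𝓘(ℂ)) 𝓘(ℂ) φ ∧
  (∀ A ∈ Gamma0 N, ∀ (τ τ' : UpperHalfPlane) (z : ℂ),
    (τ' : ℂ) = ((A.1 0 0 : ℂ) * τ + (A.1 0 1 : ℂ)) / ((A.1 1 0 : ℂ) * τ + (A.1 1 1 : ℂ)) →
    ((A.1 1 0 : ℂ) * τ + (A.1 1 1 : ℂ))⁻¹ *
        eC (-(m : ℂ) * (A.1 1 0 : ℂ) * z ^ 2 / ((A.1 1 0 : ℂ) * τ + (A.1 1 1 : ℂ))) *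
        φ (τ', z / ((A.1 1 0 : ℂ) * τ + (A.1 1 1 : ℂ))) = φ (τ, z)) ∧
  (∀ (x y : ℤ) (τ : UpperHalfPlane) (z : ℂ),
    eC ((m : ℂ) * ((x : ℂ) ^ 2 * τ + 2 * (x : ℂ) * z)) *
      φ (τ, z + (x : ℂ) * τ + (y : ℂ)) = φ (τ, z)) ∧
  (∀ g : SL(2, ℤ), ∃ h : ℕ, 0 < h ∧ ∃ c : ℕ × ℤ → ℂ,
    (∀ nr : ℕ × ℤ, (4 * nr.1 * m : ℤ) < (h : ℤ) * nr.2 ^ 2 → c nr = 0) ∧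
    ∀ (τ τ' : UpperHalfPlane) (z : ℂ),
      (τ' : ℂ) =
        ((g.1 0 0 : ℂ) * τ + (g.1 0 1 : ℂ)) / ((g.1 1 0 : ℂ) * τ + (g.1 1 1 : ℂ)) →
      ((g.1 1 0 : ℂ) * τ + (g.1 1 1 : ℂ))⁻¹ *
          eC (-(m : ℂ) * (g.1 1 0 : ℂ) * z ^ 2 / ((g.1 1 0 : ℂ) * τ + (g.1 1 1 : ℂ))) *
          φ (τ', z / ((g.1 1 0 : ℂ) * τ + (g.1 1 1 : ℂ))) =
        ∑' nr : ℕ × ℤ, c nr * eC ((nr.1 : ℂ) * τ / (h : ℂ) + (nr.2 : ℂ) * z))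

lemma eC_add (a b : ℂ) : eC (a + b) = eC a * eC b := by
  simp [eC, mul_add, Complex.exp_add]

lemma eC_zero : eC 0 = 1 := by simp [eC]

lemma eC_ne_zero (a : ℂ) : eC a ≠ 0 := Complex.exp_ne_zero _

lemma eC_int (r : ℤ) : eC (r : ℂ) = 1 := by
  rw [eC, show 2 * (Real.pi:ℂ) * Complex.I * (r:ℂ) = (r:ℂ) * (2 * Real.pi * Complex.I) by ring]
  exact Complex.exp_int_mul_two_pi_mul_I r

lemma eC_diff (c : ℂ) : Differentiable ℂ (fun w => eC (c * w)) := by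
  unfold eC
  exact Differentiable.cexp (by fun_prop)

lemma aux_vanish (g : ℂ → ℂ) (τc : ℂ) (hgd : Differentiable ℂ g)
    (hper : ∀ w, g (w + 1) = g w)
    (hqp : ∀ w, eC (τc + 2*w) * g (w + τc) = g w)
    (hodd : ∀ w, g (-w) = - g w) : ∀ w, g w = 0 := by
  set J : ℤ → ℝ → ℂ :=
    fun r y => ∫ x in (0:ℝ)..1, g (x + y*Complex.I) * eC (-(r:ℂ) * (x + y*Complex.I)) with hJ
  -- the integrand as entire function
  have hF : ∀ r : ℤ, Differentiable ℂ (fun w => g w * eC (-(r:ℂ) * w)) :=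
    fun r => hgd.mul (eC_diff _)
  have hFper : ∀ (r : ℤ) (w : ℂ), g (w+1) * eC (-(r:ℂ) * (w+1)) = g w * eC (-(r:ℂ) * w) := by
    intro r w
    rw [hper, show -(r:ℂ) * (w+1) = -(r:ℂ)*w + ((-r : ℤ) : ℂ) by push_cast; ring,
      eC_add, eC_int, mul_one]
  -- contour shift
  have JA : ∀ (r : ℤ) (y₁ y₂ : ℝ), J r y₁ = J r y₂ := by
    intro r y₁ y₂
    have key := Complex.integral_boundary_rect_eq_zero_of_differentiableOn
      (fun w => g w * eC (-(r:ℂ) * w)) ((y₁:ℂ)*Complex.I) (1 + (y₂:ℂ)*Complex.I)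
      ((hF r).differentiableOn)
    simp only [Complex.add_re, Complex.add_im, Complex.one_re, Complex.one_im,
      Complex.mul_I_re, Complex.mul_I_im, Complex.ofReal_re, Complex.ofReal_im,
      neg_zero, zero_add, add_zero, Complex.ofReal_zero, Complex.ofReal_one] at key
    have hv : (∫ t in y₁..y₂, g (1 + (t:ℂ)*Complex.I) * eC (-(r:ℂ) * (1 + (t:ℂ)*Complex.I)))
        = ∫ t in y₁..y₂, g ((t:ℂ)*Complex.I) * eC (-(r:ℂ) * ((t:ℂ)*Complex.I)) := by
      apply intervalIntegral.integral_congr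
      intro t _
      simpa [add_comm] using hFper r ((t:ℂ)*Complex.I)
    rw [hv] at key
    simp only [smul_eq_mul] at key
    simp only [hJ]
    linear_combination key
  -- oddness
  have JB : ∀ r : ℤ, J r 0 = -(J (-r) 0) := by
    intro r
    have h1 : J r 0 = ∫ x in (0:ℝ)..1, g x * eC (-((r:ℂ) * x)) := by
      simp only [hJ, Complex.ofReal_zero, zero_mul, add_zero, neg_mul]
    have h2 : J (-r) 0 = ∫ x in (0:ℝ)..1, g x * eC ((r:ℂ) * x) := by
      simp only [hJ, Complex.ofReal_zero, zero_mul, add_zero]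
      push_cast
      ring_nf
    have h3 := intervalIntegral.integral_comp_sub_left
      (fun x : ℝ => g x * eC (-((r:ℂ) * x))) 1 (a := 0) (b := 1)
    norm_num at h3
    have h4 : (∫ x in (0:ℝ)..1, g (1 - (x:ℂ)) * eC (-((r:ℂ) * (1 - (x:ℂ)))))
        = ∫ x in (0:ℝ)..1, -(g x * eC ((r:ℂ) * x)) := by
      apply intervalIntegral.integral_congr
      intro x _
      have e1 : g ((1:ℂ) - x) = - g x := by
        rw [show (1:ℂ) - x = -(x:ℂ) + 1 by ring, hper, hodd]
      have e2 : eC (-((r:ℂ) * (1 - (x:ℂ)))) = eC ((r:ℂ) * x) := by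
        rw [show -((r:ℂ) * (1 - (x:ℂ))) = (r:ℂ)*x + ((-r : ℤ) : ℂ) by push_cast; ring,
          eC_add, eC_int, mul_one]
      simp only []
      rw [e1, e2]; ring
    rw [h1, ← h3, h4, intervalIntegral.integral_neg, ← h2]
  -- recursion
  have JC : ∀ (r : ℤ) (y : ℝ), J r (y + τc.im) = eC (-((r:ℂ)+1) * τc) * J (r+2) y := by
    intro r y
    have hpt : ∀ w : ℂ, g (w + τc) * eC (-(r:ℂ)*(w+τc))
        = eC (-((r:ℂ)+1)*τc) * (g w * eC (-((r:ℂ)+2)*w)) := by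
      intro w
      have h1 : eC (-(r:ℂ)*(w+τc)) = eC (-((r:ℂ)+1)*τc) * eC (-((r:ℂ)+2)*w) * eC (τc + 2*w) := by
        rw [← eC_add, ← eC_add]; congr 1; ring
      rw [h1, ← hqp w]; ring
    have step1 : J r (y + τc.im)
        = ∫ x in (0:ℝ)..1, eC (-((r:ℂ)+1)*τc) *
            (g (↑(x - τc.re) + (y:ℂ)*Complex.I) *
              eC (-((r:ℂ)+2)*(↑(x - τc.re) + (y:ℂ)*Complex.I))) := by
      simp only [hJ]
      apply intervalIntegral.integral_congr
      intro x _
      have hw : (x:ℂ) + ((y + τc.im : ℝ):ℂ)*Complex.I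
          = (↑(x - τc.re) + (y:ℂ)*Complex.I) + τc := by
        push_cast
        linear_combination Complex.re_add_im τc
      simp only []
      rw [hw, hpt]
    have hvper : Function.Periodic
        (fun x : ℝ => g ((x:ℂ) + (y:ℂ)*Complex.I) * eC (-((r:ℂ)+2)*((x:ℂ) + (y:ℂ)*Complex.I))) 1 := by
      intro x
      simp only []
      have e1 : ((x + 1 : ℝ):ℂ) + (y:ℂ)*Complex.I = ((x:ℂ) + (y:ℂ)*Complex.I) + 1 := by
        push_cast; ring
      rw [e1, hper, show -((r:ℂ)+2)*(((x:ℂ) + (y:ℂ)*Complex.I) + 1)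
          = -((r:ℂ)+2)*((x:ℂ) + (y:ℂ)*Complex.I) + ((-(r+2) : ℤ):ℂ) by push_cast; ring,
        eC_add, eC_int, mul_one]
    have step2 : (∫ x in (0:ℝ)..1,
          g (↑(x - τc.re) + (y:ℂ)*Complex.I) * eC (-((r:ℂ)+2)*(↑(x - τc.re) + (y:ℂ)*Complex.I)))
        = J (r+2) y := by
      have h5 := intervalIntegral.integral_comp_sub_right
        (fun x : ℝ => g ((x:ℂ) + (y:ℂ)*Complex.I) * eC (-((r:ℂ)+2)*((x:ℂ) + (y:ℂ)*Complex.I)))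
        τc.re (a := 0) (b := 1)
      rw [h5, show (0:ℝ) - τc.re = -τc.re by ring, show (1:ℝ) - τc.re = -τc.re + 1 by ring,
        hvper.intervalIntegral_add_eq (-τc.re) 0, zero_add]
      simp only [hJ]
      apply intervalIntegral.integral_congr
      intro x _
      simp only []
      congr 2
      push_cast
      ring
    rw [step1, intervalIntegral.integral_const_mul, step2]
  have Jrec : ∀ r : ℤ, J r 0 = eC (-((r:ℂ)+1) * τc) * J (r+2) 0 := by
    intro r
    rw [← JC r 0, JA r 0 (0 + τc.im)]
  have J0 : J 0 0 = 0 := by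
    have h := JB 0
    rw [neg_zero] at h
    have h2 : (2:ℂ) * J 0 0 = 0 := by linear_combination h
    exact (mul_eq_zero.mp h2).resolve_left two_ne_zero
  have Jm1 : J (-1) 0 = J 1 0 := by
    have h := Jrec (-1)
    simpa [eC_zero] using h
  have J1 : J 1 0 = 0 := by
    have h := JB 1
    rw [Jm1] at h
    have h2 : (2:ℂ) * J 1 0 = 0 := by linear_combination h
    exact (mul_eq_zero.mp h2).resolve_left two_ne_zero
  have up : ∀ n : ℕ, J (n:ℤ) 0 = 0 ∧ J ((n:ℤ)+1) 0 = 0 := by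
    intro n
    induction n with
    | zero => exact ⟨by exact_mod_cast J0, by norm_num [J1]⟩
    | succ n ih =>
      refine ⟨by push_cast; exact ih.2, ?_⟩
      have h := Jrec n
      rw [ih.1] at h
      have h2 := ((mul_eq_zero.mp h.symm).resolve_left (eC_ne_zero _))
      push_cast
      rw [show (n:ℤ) + 1 + 1 = (n:ℤ) + 2 by ring]
      exact h2
  have down : ∀ n : ℕ, J (-(n:ℤ)) 0 = 0 ∧ J (-(n:ℤ)-1) 0 = 0 := by
    intro n
    induction n with
    | zero => exact ⟨by norm_num [J0], by norm_num [Jm1, J1]⟩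
    | succ n ih =>
      refine ⟨by push_cast; rw [show -((n:ℤ)+1) = -(n:ℤ)-1 by ring]; exact ih.2, ?_⟩
      have h := Jrec (-(n:ℤ)-2)
      rw [show -(n:ℤ)-2+2 = -(n:ℤ) by ring, ih.1, mul_zero] at h
      push_cast
      rw [show -((n:ℤ)+1)-1 = -(n:ℤ)-2 by ring]
      exact h
  have Jall : ∀ (r : ℤ) (y : ℝ), J r y = 0 := by
    intro r y
    rw [JA r y 0]
    obtain ⟨n, rfl | rfl⟩ := Int.eq_nat_or_neg r
    · exact (up n).1
    · exact (down n).1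
  -- Fourier inversion step
  haveI : Fact (0 < (1:ℝ)) := ⟨one_pos⟩
  intro w
  have hw : g ((w.re : ℂ) + (w.im : ℂ) * Complex.I) = 0 := by
    set y := w.im
    have hper' : Function.Periodic (fun x : ℝ => g ((x:ℂ) + (y:ℂ)*Complex.I)) 1 := by
      intro x
      simp only []
      rw [show ((x+1:ℝ):ℂ) + (y:ℂ)*Complex.I = ((x:ℂ) + (y:ℂ)*Complex.I) + 1 by push_cast; ring,
        hper]
    have hcont : Continuous (hper'.lift) := by
      apply continuous_coinduced_dom.mpr
      exact hgd.continuous.comp (by continuity)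
    set f : C(AddCircle (1:ℝ), ℂ) := ⟨hper'.lift, hcont⟩ with hf
    have hcoeff : ∀ n : ℤ, fourierCoeff (⇑f) n = 0 := by
      intro n
      rw [fourierCoeff_eq_intervalIntegral (⇑f) n 0, zero_add, one_div_one, one_smul]
      simp only [smul_eq_mul]
      have hint : (∫ x in (0:ℝ)..1, (fourier (-n) (x : AddCircle (1:ℝ)) : ℂ) * f x)
          = eC ((n:ℂ)*((y:ℂ)*Complex.I)) * J n y := by
        rw [hJ, ← intervalIntegral.integral_const_mul]
        apply intervalIntegral.integral_congr
        intro x _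
        simp only []
        have hfx : f (x : AddCircle (1:ℝ)) = g ((x:ℂ) + (y:ℂ)*Complex.I) := by
          rw [hf]
          exact hper'.lift_coe x
        have hfour : (fourier (-n) (x : AddCircle (1:ℝ)) : ℂ) = eC (-(n:ℂ)*(x:ℂ)) := by
          rw [fourier_coe_apply]
          unfold eC
          congr 1
          push_cast
          ring
        rw [hfx, hfour,
          show -(n:ℂ) * ((x:ℂ) + (y:ℂ)*Complex.I)
            = -(n:ℂ)*((y:ℂ)*Complex.I) + -(n:ℂ)*(x:ℂ) by ring, eC_add]
        have hone : eC ((n:ℂ)*((y:ℂ)*Complex.I)) * eC (-(n:ℂ)*((y:ℂ)*Complex.I)) = 1 := by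
          rw [← eC_add, show (n:ℂ)*((y:ℂ)*Complex.I) + -(n:ℂ)*((y:ℂ)*Complex.I) = 0 by ring,
            eC_zero]
        linear_combination (-(g ((x:ℂ) + (y:ℂ)*Complex.I) * eC (-(n:ℂ)*(x:ℂ)))) * hone
      rw [hint, Jall, mul_zero]
    have hsummable : Summable (fourierCoeff (⇑f)) := by
      have : fourierCoeff (⇑f) = fun _ => (0:ℂ) := funext hcoeff
      rw [this]
      exact summable_zero
    have hsum := hasSum_fourier_series_of_summable hsummable
    have hzero : HasSum (fun _ : ℤ => (0 : C(AddCircle (1:ℝ), ℂ))) f := by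
      simpa [hcoeff] using hsum
    have hf0 : f = 0 := hzero.unique hasSum_zero
    have hev : f ((w.re : ℝ) : AddCircle (1:ℝ)) = 0 := by rw [hf0]; rfl
    rw [← hper'.lift_coe w.re]
    exact hev
  rw [Complex.re_add_im] at hw
  exact hw

/-- every holomorphic Jacobi form of weight `1` and index `1` on `Γ₀(N)`
vanishes, i.e. `J_{1,1}(N) = 0`. -/
theorem stmt17 (N : ℕ) (hN : 0 < N) (φ : UpperHalfPlane × ℂ → ℂ)
    (hφ : IsJacobiFormOne 1 N φ) : φ = 0 := by
  obtain ⟨hdiff, hmod, hell, -⟩ := hφ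
  funext p
  obtain ⟨τ, z⟩ := p
  show φ (τ, z) = 0
  set g : ℂ → ℂ := fun w => φ (τ, w) with hg
  have hgd : Differentiable ℂ g := by
    have h1 : MDifferentiable 𝓘(ℂ) (𝓘(ℂ).prod 𝓘(ℂ))
        (fun w : ℂ => ((τ, w) : UpperHalfPlane × ℂ)) :=
      MDifferentiable.prodMk mdifferentiable_const mdifferentiable_id
    exact mdifferentiable_iff_differentiable.mp (hdiff.comp h1)
  have hper : ∀ w, g (w + 1) = g w := by
    intro w
    simpa [eC_zero] using hell 0 1 τ w
  have hqp : ∀ w, eC ((τ:ℂ) + 2*w) * g (w + τ) = g w := by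
    intro w
    simpa using hell 1 0 τ w
  have hodd : ∀ w, g (-w) = - g w := by
    intro w
    have hm : (-1 : SL(2,ℤ)) ∈ Gamma0 N := by simp [Gamma0_mem]
    have hτ : (τ : ℂ) = (((-1 : SL(2,ℤ)).1 0 0 : ℂ) * τ + ((-1 : SL(2,ℤ)).1 0 1 : ℂ)) /
        (((-1 : SL(2,ℤ)).1 1 0 : ℂ) * τ + ((-1 : SL(2,ℤ)).1 1 1 : ℂ)) := by
      simp
    have := hmod (-1) hm τ τ w hτ
    simp [eC_zero, div_neg, div_one] at this
    linear_combination -this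
  exact aux_vanish g (τ:ℂ) hgd hper hqp hodd z
end
end
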